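/- A real positive definite matrix S of order 2n belongs to K_n = {S symmetric : 2S - iJ ≥ 0} if and only if there exist a symplectic matrix M ∈ Sp(2n,ℝ) and a diagonal matrix D = diag(d₁,...,d_n) with d₁ ≥ d₂ ≥ ... ≥ d_n ≥ 1/2 such that S = Mᵀ[[D,0],[0,D]]M. -/

import Mathlib

/-!
For `S > 0` write `S = Tᵀ T`. The matrix `A = T⁻ᵀ J T⁻¹` is skew-symmetric and invertible, so
some orthonormal basis `(uᵢ, vᵢ)` satisfies `A uᵢ = σᵢ vᵢ`, `A vᵢ = -σᵢ uᵢ` with `σᵢ > 0`: take a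
unit eigenvector `u` of the positive operator `-A²`, put `v = A u / ‖A u‖`, and recurse on the
orthogonal complement of `span {u, v}`, which `A` preserves. Rescaling this basis by `√σᵢ` turns
`T` into a symplectic `M` with `S = Mᵀ (D ⊕ D) M`, `dᵢ = σᵢ⁻¹`.

Positivity of `2S - iJ` is invariant under `S ↦ Mᵀ S M` for symplectic `M`, because
`2 Mᵀ S M - iJ = Mᴴ (2S - iJ) M`. For `S = D ⊕ D` the matrix `2S - iJ` is the diagonal matrix
`2 (D ⊕ D) - 1` plus `1 - iJ`, which is positive since `iJ` is Hermitian with `(iJ)² = 1`; and the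
vector `eᵢ + i eₙ₊ᵢ`, which `1 - iJ` kills, shows that `dᵢ ≥ 1/2` is also necessary.
-/

open Matrix
open scoped ComplexOrder

noncomputable section

/-- The standard symplectic form matrix J = [[0, -I],[I, 0]] of order 2n. -/
def sympJ (n : ℕ) : Matrix (Fin n ⊕ Fin n) (Fin n ⊕ Fin n) ℝ :=
  Matrix.fromBlocks 0 (-1) 1 0

/-- A real 2n×2n matrix L is symplectic if Lᵀ J L = J. -/
def IsSymplectic {n : ℕ} (L : Matrix (Fin n ⊕ Fin n) (Fin n ⊕ Fin n) ℝ) : Prop :=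
  Lᵀ * sympJ n * L = sympJ n

/-- The convex set K_n of Gaussian covariance matrices:
real symmetric S of order 2n with 2S - iJ positive semidefinite (as a complex matrix). -/
def Kset (n : ℕ) : Set (Matrix (Fin n ⊕ Fin n) (Fin n ⊕ Fin n) ℝ) :=
  {S | S.IsSymm ∧
    ((2 : ℂ) • S.map (Complex.ofReal) - Complex.I • (sympJ n).map (Complex.ofReal)).PosSemidef}

open Module
open scoped InnerProductSpace

section Orthonormal

variable {𝕜 V ι κ : Type*} [RCLike 𝕜] [NormedAddCommGroup V] [InnerProductSpace 𝕜 V]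

lemma orthonormal_sumElim_iff {u : ι → V} {w : κ → V} :
    Orthonormal 𝕜 (Sum.elim u w) ↔
      Orthonormal 𝕜 u ∧ Orthonormal 𝕜 w ∧ ∀ i j, ⟪u i, w j⟫_𝕜 = 0 := by
  classical
  simp only [orthonormal_iff_ite, Sum.forall, Sum.elim_inl, Sum.elim_inr, Sum.inl.injEq,
    Sum.inr.injEq, reduceCtorEq, if_false, forall_and]
  refine ⟨fun ⟨⟨hu, _⟩, huw, hw⟩ => ⟨hu, hw, huw⟩, fun ⟨hu, hw, huw⟩ => ⟨⟨hu, ?_⟩, huw, hw⟩⟩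
  intro j i
  rw [← inner_conj_symm, huw, map_zero]

end Orthonormal

section SkewAdjoint

variable {V : Type*} [NormedAddCommGroup V] [InnerProductSpace ℝ V] {f : V →ₗ[ℝ] V}

lemma mem_orthogonal_of_skew (hf : ∀ x y, ⟪f x, y⟫_ℝ = -⟪x, f y⟫_ℝ) {U : Submodule ℝ V}
    (hU : ∀ u ∈ U, f u ∈ U) {w : V} (hw : w ∈ Uᗮ) : f w ∈ Uᗮ := by
  rw [Submodule.mem_orthogonal] at hw ⊢
  intro u hu
  rw [real_inner_comm, hf, real_inner_comm, hw _ (hU u hu), neg_zero]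

lemma exists_orthonormal_pair_of_skew [FiniteDimensional ℝ V] [Nontrivial V]
    (hf : ∀ x y, ⟪f x, y⟫_ℝ = -⟪x, f y⟫_ℝ) (hinj : Function.Injective f) :
    ∃ (e e' : V) (σ : ℝ), Orthonormal ℝ ![e, e'] ∧ 0 < σ ∧ f e = σ • e' ∧ f e' = -σ • e := by
  have hsymm : (-(f ∘ₗ f)).IsSymmetric := fun x y => by
    simp only [LinearMap.neg_apply, LinearMap.comp_apply, inner_neg_left, inner_neg_right, hf,
      neg_neg]
  set i : Fin (finrank ℝ V) := ⟨0, finrank_pos⟩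
  set e := hsymm.eigenvectorBasis rfl i
  set μ := hsymm.eigenvalues rfl i
  have he : ‖e‖ = 1 := (hsymm.eigenvectorBasis rfl).orthonormal.1 i
  have hffe : f (f e) = -(μ • e) := by
    have h := hsymm.apply_eigenvectorBasis rfl i
    simp only [LinearMap.neg_apply, LinearMap.comp_apply, RCLike.ofReal_real_eq_id, id] at h
    rw [← h, neg_neg]
  set σ := ‖f e‖
  have hσ : 0 < σ := norm_pos_iff.2 fun h => by
    have : e = 0 := hinj (h.trans f.map_zero.symm)
    simp [this] at he
  have hμ : μ = σ ^ 2 := by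
    have := hf (f e) e
    rw [hffe, inner_neg_left, real_inner_smul_left, real_inner_self_eq_norm_sq, he,
      real_inner_self_eq_norm_sq] at this
    linarith
  have hefe : ⟪e, f e⟫_ℝ = 0 := by
    have := hf e e
    rw [real_inner_comm] at this
    linarith
  refine ⟨e, σ⁻¹ • f e, σ, ?_, hσ, (smul_inv_smul₀ hσ.ne' _).symm, ?_⟩
  · simp [orthonormal_vecCons_iff, he, real_inner_smul_right, hefe, norm_smul, hσ.ne', σ]
  · rw [map_smul, hffe, hμ, smul_neg, smul_smul, neg_smul]
    congr 2
    field_simp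

theorem exists_orthonormal_skew_normal_form [FiniteDimensional ℝ V] (m : ℕ)
    (hV : finrank ℝ V = 2 * m) (hf : ∀ x y, ⟪f x, y⟫_ℝ = -⟪x, f y⟫_ℝ)
    (hinj : Function.Injective f) :
    ∃ (v : Fin m ⊕ Fin m → V) (σ : Fin m → ℝ), Orthonormal ℝ v ∧ (∀ i, 0 < σ i) ∧
      (∀ i, f (v (.inl i)) = σ i • v (.inr i)) ∧ (∀ i, f (v (.inr i)) = -σ i • v (.inl i)) := by
  induction m generalizing V with
  | zero => exact ⟨isEmptyElim, isEmptyElim, .of_isEmpty _, isEmptyElim, isEmptyElim, isEmptyElim⟩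
  | succ m ih =>
    have : Nontrivial V := Module.nontrivial_of_finrank_pos (R := ℝ) (by omega)
    obtain ⟨e, e', σ₀, hee', hσ₀, hfe, hfe'⟩ := exists_orthonormal_pair_of_skew hf hinj
    set U := Submodule.span ℝ (Set.range ![e, e'])
    have heU : e ∈ U := Submodule.subset_span ⟨0, rfl⟩
    have he'U : e' ∈ U := Submodule.subset_span ⟨1, rfl⟩
    have hU : U ≤ U.comap f := Submodule.span_le.2 <| Set.range_subset_iff.2 <|
      Fin.forall_fin_two.2
        ⟨show f e ∈ U by rw [hfe]; exact U.smul_mem _ he'U,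
          show f e' ∈ U by rw [hfe']; exact U.smul_mem _ heU⟩
    have hfW : ∀ w ∈ Uᗮ, f w ∈ Uᗮ := fun w =>
      mem_orthogonal_of_skew hf (U := U) fun u hu => hU hu
    have hW : finrank ℝ Uᗮ = 2 * m := by
      have := U.finrank_add_finrank_orthogonal
      rw [finrank_span_eq_card hee'.linearIndependent, Fintype.card_fin] at this
      omega
    obtain ⟨w, σ, hw, hσ, hfw, hfw'⟩ := ih (f := f.restrict hfW) hW
      (fun x y => hf x y) (fun x y h => Subtype.ext (hinj (congrArg Subtype.val h)))
    set x : Fin m ⊕ Fin m → V := fun p => w p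
    have hx : Orthonormal ℝ x := hw.comp_linearIsometry Uᗮ.subtypeₗᵢ
    refine ⟨Sum.elim (vecCons e (x ∘ .inl)) (vecCons e' (x ∘ .inr)), vecCons σ₀ σ,
      orthonormal_sumElim_iff.2 ⟨?_, ?_, ?_⟩, Fin.cases hσ₀ hσ,
      Fin.cases (by simpa using hfe) fun i => ?_, Fin.cases (by simpa using hfe') fun i => ?_⟩
    · exact orthonormal_vecCons_iff.2 ⟨hee'.1 0,
        fun i => Submodule.inner_right_of_mem_orthogonal heU (w _).2, hx.comp _ Sum.inl_injective⟩
    · exact orthonormal_vecCons_iff.2 ⟨hee'.1 1,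
        fun i => Submodule.inner_right_of_mem_orthogonal he'U (w _).2, hx.comp _ Sum.inr_injective⟩
    · refine Fin.cases (Fin.cases (hee'.2 Fin.zero_ne_one) fun j => ?_)
        fun i => Fin.cases ?_ fun j => ?_
      · exact Submodule.inner_right_of_mem_orthogonal heU (w _).2
      · exact Submodule.inner_left_of_mem_orthogonal he'U (w _).2
      · exact hx.2 Sum.inl_ne_inr
    · simpa using congrArg Subtype.val (hfw i)
    · simpa using congrArg Subtype.val (hfw' i)

end SkewAdjoint

theorem Matrix.exists_orthogonal_skew_normal_form {n : ℕ}
    {A : Matrix (Fin n ⊕ Fin n) (Fin n ⊕ Fin n) ℝ} (hA : Aᵀ = -A) (hA' : IsUnit A) :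
    ∃ (O : Matrix (Fin n ⊕ Fin n) (Fin n ⊕ Fin n) ℝ) (σ : Fin n → ℝ), Oᵀ * O = 1 ∧
      (∀ i, 0 < σ i) ∧ Monotone σ ∧ A * O = O * fromBlocks 0 (-diagonal σ) (diagonal σ) 0 := by
  set f := toEuclideanLin A
  have hf : ∀ x y, ⟪f x, y⟫_ℝ = -⟪x, f y⟫_ℝ := fun x y => by
    simp only [f, toLpLin_apply, EuclideanSpace.inner_eq_star_dotProduct, star_trivial,
      dotProduct_mulVec, ← mulVec_transpose, hA, neg_mulVec, neg_dotProduct]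
  have hinj : Function.Injective f := fun x y h =>
    WithLp.ofLp_injective _ (mulVec_injective_of_isUnit hA' (WithLp.toLp_injective _ h))
  obtain ⟨v, σ, hv, hσ, hfv, hfv'⟩ :=
    exists_orthonormal_skew_normal_form n (by simp [two_mul]) hf hinj
  set τ := Tuple.sort σ
  set O := Matrix.of fun p q => (v ∘ Sum.map τ τ) q p
  refine ⟨O, σ ∘ τ, ?_, fun i => hσ _, Tuple.monotone_sort σ, ?_⟩
  · ext q r
    have := orthonormal_iff_ite.1 (hv.comp _ (Sum.map_injective.2 ⟨τ.injective, τ.injective⟩)) q r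
    simpa [O, mul_apply, one_apply, PiLp.inner_apply, mul_comm] using this
  · ext p (i | i)
    · simpa [O, f, mul_apply, mulVec, dotProduct, Fintype.sum_sum_type, diagonal_apply, mul_comm]
        using congrArg (· p) (hfv (τ i))
    · simpa [O, f, mul_apply, mulVec, dotProduct, Fintype.sum_sum_type, diagonal_apply, mul_comm]
        using congrArg (· p) (hfv' (τ i))

lemma Matrix.PosDef.exists_isUnit_eq_transpose_mul_self {ι : Type*} [Fintype ι] [DecidableEq ι]
    {S : Matrix ι ι ℝ} (hS : S.PosDef) : ∃ T : Matrix ι ι ℝ, IsUnit T ∧ S = Tᵀ * T := by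
  open scoped MatrixOrder Matrix.Norms.L2Operator in
  exact CStarAlgebra.isStrictlyPositive_iff_eq_star_mul_self.1 (isStrictlyPositive_iff_posDef.2 hS)

lemma sympJ_transpose (n : ℕ) : (sympJ n)ᵀ = -sympJ n := by
  simp [sympJ, fromBlocks_transpose, fromBlocks_neg]

lemma sympJ_mul_sympJ (n : ℕ) : sympJ n * sympJ n = -1 := by
  simp [sympJ, fromBlocks_multiply, ← fromBlocks_one, fromBlocks_neg]

lemma isUnit_sympJ (n : ℕ) : IsUnit (sympJ n) :=
  .of_mul_eq_one (-sympJ n) (by rw [Matrix.mul_neg, sympJ_mul_sympJ, neg_neg])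

lemma IsSymplectic.isUnit {n : ℕ} {M : Matrix (Fin n ⊕ Fin n) (Fin n ⊕ Fin n) ℝ}
    (hM : IsSymplectic M) : IsUnit M := by
  refine .of_mul_eq_one (-(sympJ n * Mᵀ * sympJ n)) (mul_eq_one_comm.1 ?_)
  rw [Matrix.neg_mul, Matrix.mul_assoc, Matrix.mul_assoc, ← Matrix.mul_assoc Mᵀ, hM,
    sympJ_mul_sympJ, neg_neg]

theorem Matrix.PosDef.williamson {n : ℕ} {S : Matrix (Fin n ⊕ Fin n) (Fin n ⊕ Fin n) ℝ} (hS : S.PosDef) :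
    ∃ (M : Matrix (Fin n ⊕ Fin n) (Fin n ⊕ Fin n) ℝ) (d : Fin n → ℝ), IsSymplectic M ∧
      Antitone d ∧ S = Mᵀ * fromBlocks (diagonal d) 0 0 (diagonal d) * M := by
  obtain ⟨T, hT, rfl⟩ := hS.exists_isUnit_eq_transpose_mul_self
  have hTi : IsUnit T⁻¹ := isUnit_nonsing_inv_iff.2 hT
  have hT' : T⁻¹ * T = 1 := nonsing_inv_mul T ((isUnit_iff_isUnit_det T).1 hT)
  set A := T⁻¹ᵀ * sympJ n * T⁻¹
  have hA : Aᵀ = -A := by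
    simp only [A, transpose_mul, transpose_transpose, sympJ_transpose, Matrix.neg_mul,
      Matrix.mul_neg, Matrix.mul_assoc]
  have hA' : IsUnit A := (((isUnit_transpose _).2 hTi).mul (isUnit_sympJ n)).mul hTi
  obtain ⟨O, σ, hO, hσ, hmono, hAO⟩ := exists_orthogonal_skew_normal_form hA hA'
  have hO' : O * Oᵀ = 1 := mul_eq_one_comm.1 hO
  set r : Fin n → ℝ := fun i => √(σ i)
  have hr : ∀ i, r i * r i = σ i := fun i => Real.mul_self_sqrt (hσ i).le
  set R := fromBlocks (diagonal r) 0 0 (diagonal r)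
  set D := fromBlocks (diagonal fun i => (σ i)⁻¹) 0 0 (diagonal fun i => (σ i)⁻¹)
  have hRJR : R * sympJ n * R = fromBlocks 0 (-diagonal σ) (diagonal σ) 0 := by
    simp only [R, sympJ, fromBlocks_multiply, diagonal_mul_diagonal, Matrix.mul_zero,
      Matrix.zero_mul, Matrix.mul_one, Matrix.mul_neg, Matrix.neg_mul, add_zero, zero_add,
      neg_zero, hr]
  have hRDR : R * D * R = 1 := by
    have h : ∀ i, r i * (σ i)⁻¹ * r i = 1 := fun i => by
      rw [mul_right_comm, hr, mul_inv_cancel₀ (hσ i).ne']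
    simp only [R, D, fromBlocks_multiply, diagonal_mul_diagonal, Matrix.mul_zero,
      Matrix.zero_mul, add_zero, zero_add, h, diagonal_one, fromBlocks_one]
  have hMt : (R * Oᵀ * T)ᵀ = Tᵀ * O * R := by
    simp [R, transpose_mul, Matrix.mul_assoc]
  refine ⟨R * Oᵀ * T, fun i => (σ i)⁻¹, ?_, fun i j hij => inv_anti₀ (hσ i) (hmono hij), ?_⟩
  · rw [IsSymplectic, hMt]
    calc Tᵀ * O * R * sympJ n * (R * Oᵀ * T) = Tᵀ * (O * (R * sympJ n * R) * Oᵀ) * T := by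
          simp only [Matrix.mul_assoc]
      _ = Tᵀ * (A * (O * Oᵀ)) * T := by
          rw [hRJR, ← hAO]; simp only [Matrix.mul_assoc]
      _ = (T⁻¹ * T)ᵀ * sympJ n * (T⁻¹ * T) := by
          rw [hO', Matrix.mul_one]; simp only [A, transpose_mul, Matrix.mul_assoc]
      _ = sympJ n := by rw [hT', transpose_one, Matrix.one_mul, Matrix.mul_one]
  · rw [hMt]
    calc Tᵀ * T = Tᵀ * (O * (R * D * R) * Oᵀ) * T := by
          rw [hRDR, Matrix.mul_one, hO', Matrix.mul_one]
      _ = Tᵀ * O * R * D * (R * Oᵀ * T) := by simp only [Matrix.mul_assoc]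

def uncertaintyMatrix {n : ℕ} (S : Matrix (Fin n ⊕ Fin n) (Fin n ⊕ Fin n) ℝ) :
    Matrix (Fin n ⊕ Fin n) (Fin n ⊕ Fin n) ℂ :=
  (2 : ℂ) • S.map Complex.ofReal - Complex.I • (sympJ n).map Complex.ofReal

lemma conjTranspose_map_ofReal {ι : Type*} (A : Matrix ι ι ℝ) :
    (A.map Complex.ofReal)ᴴ = Aᵀ.map Complex.ofReal := by
  ext; simp

lemma map_ofReal_mul {ι : Type*} [Fintype ι] (A B : Matrix ι ι ℝ) :
    (A * B).map Complex.ofReal = A.map Complex.ofReal * B.map Complex.ofReal :=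
  Matrix.map_mul (f := Complex.ofRealHom)

lemma IsSymplectic.uncertaintyMatrix_transpose_mul_mul {n : ℕ}
    {M : Matrix (Fin n ⊕ Fin n) (Fin n ⊕ Fin n) ℝ} (hM : IsSymplectic M)
    (S : Matrix (Fin n ⊕ Fin n) (Fin n ⊕ Fin n) ℝ) :
    uncertaintyMatrix (Mᵀ * S * M) =
      (M.map Complex.ofReal)ᴴ * uncertaintyMatrix S * M.map Complex.ofReal := by
  rw [IsSymplectic] at hM
  simp only [uncertaintyMatrix, Matrix.mul_sub, Matrix.sub_mul, Matrix.mul_smul, Matrix.smul_mul,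
    conjTranspose_map_ofReal, ← map_ofReal_mul, hM]

lemma IsSymplectic.posSemidef_uncertaintyMatrix_iff {n : ℕ}
    {M : Matrix (Fin n ⊕ Fin n) (Fin n ⊕ Fin n) ℝ} (hM : IsSymplectic M)
    (S : Matrix (Fin n ⊕ Fin n) (Fin n ⊕ Fin n) ℝ) :
    (uncertaintyMatrix (Mᵀ * S * M)).PosSemidef ↔ (uncertaintyMatrix S).PosSemidef := by
  rw [hM.uncertaintyMatrix_transpose_mul_mul]
  exact (hM.isUnit.map Complex.ofRealHom.mapMatrix).posSemidef_star_left_conjugate_iff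

lemma sympJ_map_ofReal_mulVec {n : ℕ} (x : Fin n ⊕ Fin n → ℂ) :
    (sympJ n).map Complex.ofReal *ᵥ x = Sum.elim (-(x ∘ Sum.inr)) (x ∘ Sum.inl) := by
  simp [sympJ, fromBlocks_map, fromBlocks_mulVec, Matrix.map_neg, Matrix.map_one, neg_mulVec]

lemma posSemidef_one_sub_I_smul_sympJ (n : ℕ) :
    (1 - Complex.I • (sympJ n).map Complex.ofReal).PosSemidef := by
  set K := Complex.I • (sympJ n).map Complex.ofReal
  have hK : Kᴴ = K := by
    simp [K, conjTranspose_map_ofReal, sympJ_transpose, Matrix.map_neg]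
  have hKK : K * K = 1 := by
    simp [K, ← map_ofReal_mul, sympJ_mul_sympJ, Matrix.map_neg, Matrix.map_one, smul_smul]
  have h : 1 - K = (1 / 2 : ℂ) • ((1 - K)ᴴ * (1 - K)) := by
    simp only [conjTranspose_sub, conjTranspose_one, hK, sub_mul, mul_sub, hKK, mul_one, one_mul]
    module
  rw [h]
  exact (posSemidef_conjTranspose_mul_self _).smul (by norm_num [Complex.le_def])

lemma uncertaintyMatrix_fromBlocks_diagonal {n : ℕ} (d : Fin n → ℝ) :
    uncertaintyMatrix (fromBlocks (diagonal d) 0 0 (diagonal d)) =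
      diagonal (fun p => ((2 * Sum.elim d d p - 1 : ℝ) : ℂ)) +
        (1 - Complex.I • (sympJ n).map Complex.ofReal) := by
  ext p q
  rcases eq_or_ne p q with rfl | h
  · simp [uncertaintyMatrix]
  · simp [uncertaintyMatrix, h]

lemma posSemidef_uncertaintyMatrix_fromBlocks_diagonal_iff {n : ℕ} (d : Fin n → ℝ) :
    (uncertaintyMatrix (fromBlocks (diagonal d) 0 0 (diagonal d))).PosSemidef ↔
      ∀ i, 1 / 2 ≤ d i := by
  rw [uncertaintyMatrix_fromBlocks_diagonal]
  refine ⟨fun h i => ?_, fun hd => ?_⟩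
  · set x : Fin n ⊕ Fin n → ℂ := Sum.elim (Pi.single i 1) (Pi.single i Complex.I)
    have hx : (1 - Complex.I • (sympJ n).map Complex.ofReal) *ᵥ x = 0 := by
      ext (j | j) <;> by_cases h : j = i <;>
        simp [x, sub_mulVec, sympJ_map_ofReal_mulVec, smul_mulVec, h]
    have hq := h.dotProduct_mulVec_nonneg x
    rw [add_mulVec, hx, add_zero] at hq
    have h4 : star x ⬝ᵥ (diagonal (fun p => ((2 * Sum.elim d d p - 1 : ℝ) : ℂ)) *ᵥ x) =
        ((4 * d i - 2 : ℝ) : ℂ) := by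
      simp [x, dotProduct, mulVec_diagonal, Fintype.sum_sum_type, Pi.single_apply]
      ring_nf
      rw [Complex.I_sq]
      ring
    rw [h4, Complex.zero_le_real] at hq
    linarith
  · refine .add (.diagonal fun p => ?_) (posSemidef_one_sub_I_smul_sympJ n)
    rcases p with i | i <;> exact Complex.zero_le_real.2 (by simp; linarith [hd i])

theorem mem_Kset_iff_williamson (n : ℕ)
    (S : Matrix (Fin n ⊕ Fin n) (Fin n ⊕ Fin n) ℝ) (hS : S.PosDef) :
    S ∈ Kset n ↔
      ∃ (M : Matrix (Fin n ⊕ Fin n) (Fin n ⊕ Fin n) ℝ) (d : Fin n → ℝ),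
        IsSymplectic M ∧ (∀ i j : Fin n, i ≤ j → d j ≤ d i) ∧ (∀ i, (1 / 2 : ℝ) ≤ d i) ∧
        S = Mᵀ * Matrix.fromBlocks (Matrix.diagonal d) 0 0 (Matrix.diagonal d) * M := by
  constructor
  · rintro ⟨-, hpsd⟩
    obtain ⟨M, d, hM, hd, rfl⟩ := hS.williamson
    exact ⟨M, d, hM, hd, (posSemidef_uncertaintyMatrix_fromBlocks_diagonal_iff d).1
      ((hM.posSemidef_uncertaintyMatrix_iff _).1 hpsd), rfl⟩
  · rintro ⟨M, d, hM, -, hd, rfl⟩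
    refine ⟨?_, (hM.posSemidef_uncertaintyMatrix_iff _).2
      ((posSemidef_uncertaintyMatrix_fromBlocks_diagonal_iff d).2 hd)⟩
    simp [IsSymm, transpose_mul, Matrix.mul_assoc]
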